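/- arXiv:1607.02817 — 3 statements merged into one kernel-verified Lean document; each statement's English description precedes it below -/
import Mathlib

section
/- The rate of an (n,k,r,4) sequential-recovery code over any field F_q satisfies k/n ≤ r²/(r²+2r+2). -/
open Finset

/-- Hamming weight of a vector. -/
def wt {ι : Type*} [Fintype ι] {F : Type*} [Field F] [DecidableEq F] (v : ι → F) : ℕ :=
  (Finset.univ.filter (fun i => v i ≠ 0)).card

/-- `C` is an `(n,k,r,t)_seq` code: for every set `E` of at most `t` erased coordinates
there is an ordering of `E` and dual codewords of weight `≤ r+1`, each containing the
current erased coordinate in its support and none of the later (still erased) ones. -/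
def SeqRecov {n : ℕ} {F : Type*} [Field F] [DecidableEq F]
    (C : Submodule F (Fin n → F)) (r t : ℕ) : Prop :=
  ∀ E : Finset (Fin n), E.card ≤ t →
    ∃ σ : List (Fin n), σ.Nodup ∧ σ.toFinset = E ∧
      ∀ j : Fin σ.length, ∃ h : Fin n → F,
        (∀ c ∈ C, ∑ i, h i * c i = 0) ∧ wt h ≤ r + 1 ∧ h (σ.get j) ≠ 0 ∧
        ∀ j' : Fin σ.length, (j : ℕ) < (j' : ℕ) → h (σ.get j') = 0

/-!
Let `B` be a maximal linearly independent family of dual codewords of weight at most `r + 1`;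
then `k + |B| ≤ n`. Sequential recovery makes every set of at most four columns of the matrix
with rows `B` linearly independent, so the column supports satisfy Hall's condition for sets of
at most four columns. A discharging argument on this incidence structure, whose rows have at
most `r + 1` entries, gives `(2r + 2) n ≤ (r² + 2r + 2) |B|`: weight-one columns occupy
distinct rows, every other column inside those rows has weight at least four, and the weight-two
columns with exactly one row outside them have distinct outside rows.
-/

def HallUpTo {α ι : Type*} [DecidableEq ι] (col : α → Finset ι) (t : ℕ) : Prop :=
  ∀ s : Finset α, s.card ≤ t → s.card ≤ (s.biUnion col).card

section Incidence

variable {α ι : Type*} {col : α → Finset ι}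

section HallCondition

variable [DecidableEq ι]

theorem sum_card_inter_le {X : Finset α} {S : Finset ι} {m : ℕ}
    (hrow : ∀ i ∈ S, (X.filter (i ∈ col ·)).card ≤ m) :
    ∑ x ∈ X, (col x ∩ S).card ≤ S.card * m := by
  have hcount := sum_card_bipartiteAbove_eq_sum_card_bipartiteBelow (fun x i => i ∈ col x)
    (s := X) (t := S)
  simp only [bipartiteAbove, bipartiteBelow, filter_mem_eq_inter, inter_comm S] at hcount
  rw [hcount]
  exact sum_le_card_nsmul S _ m hrow

theorem HallUpTo.card_col_pos {t : ℕ} (h : HallUpTo col t) (ht : 1 ≤ t) (x : α) :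
    0 < (col x).card := by
  simpa using h {x} (by simpa using ht)

end HallCondition

variable [Fintype α]

def unitCols (col : α → Finset ι) : Finset α := univ.filter fun x => (col x).card = 1

theorem mem_unitCols {x : α} : x ∈ unitCols col ↔ (col x).card = 1 := by
  simp [unitCols]

variable [DecidableEq ι]

def unitRows (col : α → Finset ι) : Finset ι := (unitCols col).biUnion col

def mixedCols (col : α → Finset ι) : Finset α :=
  univ.filter fun x => (col x ∩ unitRows col).card = 1 ∧ (col x \ unitRows col).card = 1

theorem mem_mixedCols {x : α} :
    x ∈ mixedCols col ↔
      (col x ∩ unitRows col).card = 1 ∧ (col x \ unitRows col).card = 1 := by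
  simp [mixedCols]

theorem col_subset_unitRows {x : α} (hx : x ∈ unitCols col) : col x ⊆ unitRows col :=
  subset_biUnion_of_mem col hx

theorem biUnion_filter_unitCols_subset (U : Finset ι) :
    ((unitCols col).filter (col · ⊆ U)).biUnion col = U ∩ unitRows col := by
  ext i
  simp only [mem_biUnion, mem_filter, mem_inter, unitRows]
  constructor
  · rintro ⟨y, ⟨hy, hyU⟩, hi⟩
    exact ⟨hyU hi, y, hy, hi⟩
  · rintro ⟨hiU, y, hy, hi⟩
    obtain ⟨a, ha⟩ := card_eq_one.1 (mem_unitCols.1 hy)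
    refine ⟨y, ⟨hy, ?_⟩, hi⟩
    rw [ha] at hi ⊢
    rwa [singleton_subset_iff, ← mem_singleton.1 hi]

namespace HallUpTo

variable {t : ℕ}

theorem pairwiseDisjoint_unitCols [DecidableEq α] (h : HallUpTo col t) (ht : 2 ≤ t) :
    (unitCols col : Set α).PairwiseDisjoint col := by
  intro x hx y hy hxy
  obtain ⟨a, ha⟩ := card_eq_one.1 (mem_unitCols.1 hx)
  obtain ⟨b, hb⟩ := card_eq_one.1 (mem_unitCols.1 hy)
  rw [Function.onFun, ha, hb, disjoint_singleton]
  rintro rfl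
  have := h {x, y} (by rw [card_pair hxy]; exact ht)
  simp [card_pair hxy, ha, hb] at this

theorem card_biUnion_of_subset_unitCols [DecidableEq α] (h : HallUpTo col t) (ht : 2 ≤ t)
    {T : Finset α} (hT : T ⊆ unitCols col) : (T.biUnion col).card = T.card := by
  rw [card_biUnion ((h.pairwiseDisjoint_unitCols ht).subset (by exact_mod_cast hT))]
  rw [sum_congr rfl fun x hx => mem_unitCols.1 (hT hx), card_eq_sum_ones]

/-- Adjoining to `s` the unit columns inside its rows costs no new rows, so Hall's condition
charges all of `s` to its rows outside `unitRows`. -/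
theorem card_le_card_sdiff_unitRows [DecidableEq α] (h : HallUpTo col t) (ht : 2 ≤ t)
    {s : Finset α} (hs : Disjoint s (unitCols col))
    (hst : s.card + (s.biUnion col ∩ unitRows col).card ≤ t) :
    s.card ≤ (s.biUnion col \ unitRows col).card := by
  set U := s.biUnion col
  set T := (unitCols col).filter (col · ⊆ U)
  have hTU : T.biUnion col = U ∩ unitRows col := biUnion_filter_unitCols_subset U
  have hT : T.card = (U ∩ unitRows col).card := by
    rw [← hTU, h.card_biUnion_of_subset_unitCols ht (filter_subset _ _)]
  have hsT : (s ∪ T).card = s.card + (U ∩ unitRows col).card := by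
    rw [card_union_of_disjoint (hs.mono_right (filter_subset _ _)), hT]
  have hcover : (s ∪ T).biUnion col = U := by
    rw [union_biUnion, hTU, union_eq_left]
    exact inter_subset_left
  have hall := h (s ∪ T) (by omega)
  rw [hsT, hcover, ← card_inter_add_card_sdiff U (unitRows col)] at hall
  omega

theorem le_card_col [DecidableEq α] (h : HallUpTo col t) (ht : 2 ≤ t) {x : α}
    (hx : x ∉ unitCols col) (hsub : col x ⊆ unitRows col) : t ≤ (col x).card := by
  by_contra! hlt
  have := h.card_le_card_sdiff_unitRows ht (s := {x}) (by simpa using hx)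
    (by simp [inter_eq_left.2 hsub]; omega)
  simp [sdiff_eq_empty_iff_subset.2 hsub] at this

theorem card_filter_mixedCols_le_one [DecidableEq α] (h : HallUpTo col 4) {g : ι}
    (hg : g ∉ unitRows col) : ((mixedCols col).filter (g ∈ col ·)).card ≤ 1 := by
  refine card_le_one.2 fun y hy y' hy' => ?_
  by_contra hne
  rw [mem_filter, mem_mixedCols] at hy hy'
  have hsdiff : ∀ z, (col z \ unitRows col).card = 1 → g ∈ col z →
      col z \ unitRows col = {g} := fun z hz hgz =>
    eq_singleton_iff_unique_mem.2 ⟨mem_sdiff.2 ⟨hgz, hg⟩, fun _ ha =>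
      card_le_one.1 hz.le _ ha _ (mem_sdiff.2 ⟨hgz, hg⟩)⟩
  have hnot : ∀ z ∈ mixedCols col, z ∉ unitCols col := fun z hz hz1 => by
    have := card_inter_add_card_sdiff (col z) (unitRows col)
    rw [mem_unitCols.1 hz1, (mem_mixedCols.1 hz).1, (mem_mixedCols.1 hz).2] at this
    omega
  have hpair : ({y, y'} : Finset α).biUnion col = col y ∪ col y' := by simp
  have key := h.card_le_card_sdiff_unitRows (by norm_num) (s := {y, y'})
    (by simp [hnot y (mem_mixedCols.2 hy.1), hnot y' (mem_mixedCols.2 hy'.1)])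
    (by
      rw [card_pair hne, hpair, union_inter_distrib_right]
      have := card_union_le (col y ∩ unitRows col) (col y' ∩ unitRows col)
      omega)
  rw [card_pair hne, hpair, union_sdiff_distrib, hsdiff y hy.1.2 hy.2,
    hsdiff y' hy'.1.2 hy'.2] at key
  simp at key

/-- Summed over all columns, the right side is at most `(r² + 2r + 2) |ι|`: the first two terms
count the entries of rows inside and outside `unitRows`, mixed columns inject into the rows
outside `unitRows`, and unit columns biject with `unitRows`. -/
theorem charge_le [DecidableEq α] (h : HallUpTo col 4) {r : ℕ} (hr : 1 ≤ r) (x : α) :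
    2 * r + 2 ≤ r * (col x ∩ unitRows col).card + (r + 1) * (col x \ unitRows col).card +
      (if x ∈ mixedCols col then 1 else 0) + (if x ∈ unitCols col then r + 2 else 0) := by
  set p := (col x ∩ unitRows col).card
  set q := (col x \ unitRows col).card
  have hpq : p + q = (col x).card := card_inter_add_card_sdiff _ _
  have hpos := h.card_col_pos (by norm_num) x
  have hq0 : q = 0 ↔ col x ⊆ unitRows col := by simp [q, sdiff_eq_empty_iff_subset]
  by_cases hu : x ∈ unitCols col
  · have hq : q = 0 := hq0.2 (col_subset_unitRows hu)
    have hp : 1 ≤ p := by omega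
    simp only [hu, if_true]
    split_ifs <;> nlinarith
  by_cases hm : x ∈ mixedCols col
  · have hp : p = 1 := (mem_mixedCols.1 hm).1
    have hq : q = 1 := (mem_mixedCols.1 hm).2
    simp only [hm, hu, if_true, if_false, hp, hq]
    omega
  have hu' : (col x).card ≠ 1 := mt mem_unitCols.2 hu
  have hm' : ¬(p = 1 ∧ q = 1) := mt mem_mixedCols.2 hm
  simp only [hm, hu, if_false]
  rcases Nat.lt_or_ge q 2 with hq | hq
  · interval_cases q
    · have := h.le_card_col (by norm_num) hu (hq0.1 rfl)
      nlinarith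
    · have : 2 ≤ p := by omega
      nlinarith
  · nlinarith

theorem card_mul_le [DecidableEq α] [Fintype ι] (h : HallUpTo col 4) {r : ℕ} (hr : 1 ≤ r)
    (hrow : ∀ i, (univ.filter (i ∈ col ·)).card ≤ r + 1) :
    (2 * r + 2) * Fintype.card α ≤ (r ^ 2 + 2 * r + 2) * Fintype.card ι := by
  set R := unitRows col
  have hp : ∑ x, (col x ∩ R).card ≤ R.card * (r + 1) := sum_card_inter_le fun i _ => hrow i
  have hq : ∑ x, (col x \ R).card ≤ Rᶜ.card * (r + 1) := by
    simpa only [sdiff_eq_inter_compl] using sum_card_inter_le fun i _ => hrow i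
  have hmixed : (mixedCols col).card ≤ Rᶜ.card := by
    calc (mixedCols col).card = ∑ x ∈ mixedCols col, (col x ∩ Rᶜ).card := by
          rw [card_eq_sum_ones]
          exact sum_congr rfl fun x hx => by rw [← sdiff_eq_inter_compl, (mem_mixedCols.1 hx).2]
      _ ≤ Rᶜ.card * 1 :=
          sum_card_inter_le fun g hg => h.card_filter_mixedCols_le_one (mem_compl.1 hg)
      _ = Rᶜ.card := mul_one _
  have hunit : (unitCols col).card = R.card :=
    (h.card_biUnion_of_subset_unitCols (by norm_num) subset_rfl).symm
  have hrows : R.card + Rᶜ.card = Fintype.card ι := card_add_card_compl R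
  calc (2 * r + 2) * Fintype.card α = ∑ _x : α, (2 * r + 2) := by simp [mul_comm]
    _ ≤ ∑ x, (r * (col x ∩ R).card + (r + 1) * (col x \ R).card +
          (if x ∈ mixedCols col then 1 else 0) + (if x ∈ unitCols col then r + 2 else 0)) :=
        sum_le_sum fun x _ => h.charge_le hr x
    _ = r * ∑ x, (col x ∩ R).card + (r + 1) * ∑ x, (col x \ R).card +
          (mixedCols col).card + (r + 2) * (unitCols col).card := by
        simp only [sum_add_distrib, mul_sum, sum_ite_mem, univ_inter, sum_const, smul_eq_mul]
        ring
    _ ≤ (r ^ 2 + 2 * r + 2) * Fintype.card ι := by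
        rw [← hrows, hunit]
        nlinarith

end HallUpTo

end Incidence

theorem LinearIndepOn.card_le_card_biUnion_support {K ι α : Type*} [Field K] [DecidableEq K]
    [Fintype ι] [DecidableEq ι] {v : α → ι → K} {s : Finset α} (hs : LinearIndepOn K v s) :
    s.card ≤ (s.biUnion fun x => univ.filter (v x · ≠ 0)).card := by
  set S := s.biUnion fun x => univ.filter (v x · ≠ 0)
  have hvanish : ∀ y ∈ s, ∀ i ∉ S, v y i = 0 := fun y hy i hi => by
    by_contra hne
    exact hi (mem_biUnion.2 ⟨y, hy, by simpa using hne⟩)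
  let restrict (T : Finset ι) : (ι → K) →ₗ[K] (T → K) := LinearMap.funLeft K K Subtype.val
  have hdisj : Disjoint (Submodule.span K (Set.range fun y : (s : Set α) => v y))
      (LinearMap.ker (restrict S)) := by
    rw [Submodule.disjoint_def]
    intro u hu hker
    have hoff : u ∈ LinearMap.ker (restrict Sᶜ) := by
      refine Submodule.span_le.2 ?_ hu
      rintro _ ⟨y, rfl⟩
      ext ⟨i, hi⟩
      exact hvanish y y.2 i (mem_compl.1 hi)
    ext i
    by_cases hi : i ∈ S
    · exact congr_fun hker ⟨i, hi⟩
    · exact congr_fun hoff ⟨i, mem_compl.2 hi⟩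
  have := (LinearIndependent.map hs hdisj).fintype_card_le_finrank
  simpa [Module.finrank_fintype_fun_eq_card] using this

theorem linearIndepOn_of_exists_notMem_span {K M α : Type*} [DivisionRing K] [AddCommGroup M]
    [Module K M] [DecidableEq α] {v : α → M} {t : ℕ}
    (h : ∀ s : Finset α, s.Nonempty → s.card ≤ t →
      ∃ x ∈ s, v x ∉ Submodule.span K (v '' ↑(s.erase x)))
    (s : Finset α) (hs : s.card ≤ t) : LinearIndepOn K v s := by
  induction s using Finset.strongInduction with
  | H s ih =>
    rcases s.eq_empty_or_nonempty with rfl | hne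
    · simp
    obtain ⟨x, hx, hspan⟩ := h s hne hs
    rw [← insert_erase hx, coe_insert, linearIndepOn_insert (by simp)]
    exact ⟨ih _ (erase_ssubset hx) ((card_erase_le).trans hs), hspan⟩

theorem finrank_add_card_le {K α m : Type*} [Field K] [Fintype α] [Fintype m]
    (C : Submodule K (α → K)) {b : m → α → K} (hb : LinearIndependent K b)
    (horth : ∀ i, ∀ c ∈ C, ∑ x, b i x * c x = 0) :
    Module.finrank K C + Fintype.card m ≤ Fintype.card α := by
  set Φ := (Matrix.of b).mulVecLin
  have hC : C ≤ LinearMap.ker Φ := fun c hc => funext fun i => horth i c hc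
  have hrange : Module.finrank K (LinearMap.range Φ) = Fintype.card m := by
    rw [← Matrix.rank, Matrix.rank_eq_finrank_span_row]
    exact finrank_span_eq_card hb
  have := LinearMap.finrank_range_add_finrank_ker Φ
  have := Submodule.finrank_mono hC
  rw [Module.finrank_fintype_fun_eq_card] at *
  omega

def lowWeightDual {n : ℕ} {F : Type*} [Field F] [DecidableEq F] (C : Submodule F (Fin n → F))
    (r : ℕ) : Set (Fin n → F) :=
  {h | (∀ c ∈ C, ∑ i, h i * c i = 0) ∧ wt h ≤ r + 1}

section SeqRecov

variable {n r t : ℕ} {F : Type*} [Field F] [DecidableEq F] {C : Submodule F (Fin n → F)}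

theorem SeqRecov.exists_separating (hseq : SeqRecov C r t) {s : Finset (Fin n)}
    (hne : s.Nonempty) (hs : s.card ≤ t) :
    ∃ x ∈ s, ∃ h ∈ lowWeightDual C r, h x ≠ 0 ∧ ∀ y ∈ s, y ≠ x → h y = 0 := by
  obtain ⟨σ, -, rfl, hrec⟩ := hseq s hs
  have hlen : 0 < σ.length := List.length_pos_iff.2 (by simpa using hne.ne_empty)
  obtain ⟨h, hdual, hwt, hx, hlater⟩ := hrec ⟨0, hlen⟩
  refine ⟨σ.get ⟨0, hlen⟩, List.mem_toFinset.2 (σ.get_mem _), h, ⟨hdual, hwt⟩, hx, ?_⟩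
  intro y hy hyx
  obtain ⟨j, rfl⟩ := List.mem_iff_get.1 (List.mem_toFinset.1 hy)
  exact hlater j (Nat.pos_of_ne_zero fun hj => hyx (congrArg σ.get (Fin.ext hj)))

theorem SeqRecov.exists_notMem_span (hseq : SeqRecov C r t) {m : Type*} [Fintype m]
    {b : m → Fin n → F} (hspan : lowWeightDual C r ⊆ Submodule.span F (Set.range b))
    (s : Finset (Fin n)) (hne : s.Nonempty) (hs : s.card ≤ t) :
    ∃ x ∈ s, (fun i => b i x) ∉ Submodule.span F ((fun y i => b i y) '' ↑(s.erase x)) := by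
  obtain ⟨x, hx, h, hlow, hhx, hvanish⟩ := hseq.exists_separating hne hs
  obtain ⟨c, hc⟩ := (Submodule.mem_span_range_iff_exists_fun F).1 (hspan hlow)
  set φ := Fintype.linearCombination F c
  have hφ : ∀ y, φ (fun i => b i y) = h y := fun y => by
    simp [φ, Fintype.linearCombination_apply, ← hc, Finset.sum_apply, mul_comm]
  have hker : Submodule.span F ((fun y i => b i y) '' ↑(s.erase x)) ≤ LinearMap.ker φ := by
    rw [Submodule.span_le]
    rintro _ ⟨y, hy, rfl⟩
    exact (hφ y).trans (hvanish y (mem_of_mem_erase hy) (ne_of_mem_erase hy))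
  exact ⟨x, hx, fun hmem => hhx ((hφ x).symm.trans (hker hmem))⟩

theorem SeqRecov.hallUpTo (hseq : SeqRecov C r t) {m : Type*} [Fintype m] [DecidableEq m]
    {b : m → Fin n → F} (hspan : lowWeightDual C r ⊆ Submodule.span F (Set.range b)) :
    HallUpTo (fun x => univ.filter fun i => b i x ≠ 0) t := fun s hs =>
  (linearIndepOn_of_exists_notMem_span (hseq.exists_notMem_span hspan) s hs)
    |>.card_le_card_biUnion_support

end SeqRecov

theorem rate_bound_four_erasures_general {n r : ℕ} {F : Type*} [Field F] [DecidableEq F]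
    (hr : 1 ≤ r) (C : Submodule F (Fin n → F))
    (hseq : SeqRecov C r 4) :
    (Module.finrank F C : ℚ) / (n : ℚ) ≤ (r : ℚ) ^ 2 / ((r : ℚ) ^ 2 + 2 * r + 2) := by
  classical
  obtain ⟨B, hBlow, hBspan, hBind⟩ := exists_linearIndependent F (lowWeightDual C r)
  have : Fintype B := hBind.setFinite.fintype
  have hdim : Module.finrank F C + Fintype.card B ≤ n := by
    simpa using finrank_add_card_le C hBind fun h c hc => (hBlow h.2).1 c hc
  have hall : HallUpTo (fun x => univ.filter fun h : B => (h : Fin n → F) x ≠ 0) 4 :=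
    hseq.hallUpTo (by rw [Subtype.range_coe, hBspan]; exact Submodule.subset_span)
  have hcount := hall.card_mul_le hr fun h => by simpa [wt] using (hBlow h.2).2
  rw [Fintype.card_fin] at hcount
  have hrate : Module.finrank F C * (r ^ 2 + 2 * r + 2) ≤ r ^ 2 * n := by
    nlinarith [Nat.mul_le_mul_right (r ^ 2 + 2 * r + 2) hdim]
  have hD : (0 : ℚ) < r ^ 2 + 2 * r + 2 := by positivity
  refine div_le_of_le_mul₀ (by positivity) (by positivity) ?_
  rw [div_mul_eq_mul_div, le_div_iff₀ hD]
  exact_mod_cast hrate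

/-- The rate of an `(n,k,r,4)_seq` code over any field satisfies
`k/n ≤ r²/(r²+2r+2)`. -/
theorem rate_bound_four_erasures {n r : ℕ} {F : Type*} [Field F] [DecidableEq F]
    (hn : 0 < n) (hr : 1 ≤ r) (C : Submodule F (Fin n → F))
    (hseq : SeqRecov C r 4) :
    (Module.finrank F C : ℚ) / (n : ℚ) ≤ (r : ℚ) ^ 2 / ((r : ℚ) ^ 2 + 2 * r + 2) :=
  rate_bound_four_erasures_general hr C hseq
end

section
/- For every r ≥ 2 and suitable L (such that an r-regular bipartite graph on 2L vertices with girth ≥ 6 exists), Construction 1 yields a binary code of length Lr² + 2Lr + 2L and dimension Lr², hence of rate r²/(r²+2r+2), meeting the rate upper bound for (n,k,r,4)_seq codes with equality. -/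
/-!
The parity-check map is surjective: given any syndrome, set the information symbols to zero,
choose each vertex symbol `n_v^{(i)}` equal to the syndrome of its check, and let `N_v` fix the
remaining check at `v`. By rank–nullity the code then has dimension `n - (2Lr + 2L)`, and
double counting the `Lr` edges of an `r`-regular graph on `2L` vertices gives
`n = Lr² + 2Lr + 2L`, so the dimension is `Lr²`.
-/

open Finset

/-- Vertex type of a bipartite graph with parts of size `L`. -/
abbrev BVert (L : ℕ) : Type := Fin L ⊕ Fin L

/-- Coordinates of the Construction-1 code: `r` copies of the edges of the graph
(information symbols), `r` copies of the vertices (vertex parity symbols `n_l^{(i)}`),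
and one cross-copy parity symbol `N_l` per vertex. -/
abbrev ConsCoord (L r : ℕ) (G : SimpleGraph (BVert L)) [DecidableRel G.Adj] : Type :=
  (Fin r × G.edgeSet) ⊕ (Fin r × BVert L) ⊕ BVert L

/-- Parity checks of the Construction-1 code: one per vertex symbol `n_v^{(i)}`
and one per cross-copy symbol `N_v`. -/
abbrev ConsCheck (L r : ℕ) : Type := (Fin r × BVert L) ⊕ BVert L

/-- Membership of a coordinate in the support of a parity check: the check of `n_v^{(i)}`
involves `n_v^{(i)}` together with the information symbols on the edges of copy `i`
incident to `v`; the check of `N_v` involves `N_v` together with `n_v^{(1)},…,n_v^{(r)}`. -/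
def inCheck (L r : ℕ) (G : SimpleGraph (BVert L)) [DecidableRel G.Adj] :
    ConsCheck L r → ConsCoord L r G → Bool
  | Sum.inl (i, v), Sum.inl (j, e) => decide (i = j) && decide (v ∈ (e : Sym2 (BVert L)))
  | Sum.inl (i, v), Sum.inr (Sum.inl (j, w)) => decide (i = j) && decide (v = w)
  | Sum.inl _, Sum.inr (Sum.inr _) => false
  | Sum.inr _, Sum.inl _ => false
  | Sum.inr v, Sum.inr (Sum.inl (_, w)) => decide (v = w)
  | Sum.inr v, Sum.inr (Sum.inr w) => decide (v = w)

/-- The parity-check map of the Construction-1 code over `𝔽₂`. -/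
noncomputable def parityMap (L r : ℕ) (G : SimpleGraph (BVert L)) [DecidableRel G.Adj] :
    ((ConsCoord L r G → ZMod 2) →ₗ[ZMod 2] (ConsCheck L r → ZMod 2)) :=
  LinearMap.pi fun c =>
    ∑ x ∈ Finset.univ.filter (fun x => inCheck L r G c x = true), LinearMap.proj x

theorem SimpleGraph.IsRegularOfDegree.two_mul_card_edgeSet {V : Type*} [Fintype V]
    {G : SimpleGraph V} [DecidableRel G.Adj] {d : ℕ} (h : G.IsRegularOfDegree d) :
    2 * Fintype.card G.edgeSet = Fintype.card V * d := by
  rw [← SimpleGraph.edgeFinset_card, ← G.sum_degrees_eq_twice_card_edges]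
  simp [h.degree_eq, mul_comm]

section

variable {L r : ℕ} (G : SimpleGraph (BVert L)) [DecidableRel G.Adj]

theorem parityMap_apply (w : ConsCoord L r G → ZMod 2) (c : ConsCheck L r) :
    parityMap L r G w c = ∑ x : ConsCoord L r G, if inCheck L r G c x then w x else 0 := by
  simp only [parityMap, LinearMap.pi_apply, LinearMap.coe_sum, Finset.sum_apply,
    LinearMap.proj_apply, Finset.sum_filter,
    apply_ite (fun (f : (ConsCoord L r G → ZMod 2) →ₗ[ZMod 2] ZMod 2) => f w),
    LinearMap.zero_apply]

theorem parityMap_apply_vertex (w : ConsCoord L r G → ZMod 2) (i : Fin r) (v : BVert L) :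
    parityMap L r G w (Sum.inl (i, v)) =
      (∑ e : G.edgeSet with v ∈ e.1, w (Sum.inl (i, e))) +
        w (Sum.inr (Sum.inl (i, v))) := by
  rw [parityMap_apply]
  simp [inCheck, Fintype.sum_sum_type, Fintype.sum_prod_type, ite_and, Finset.sum_filter]

theorem parityMap_apply_cross (w : ConsCoord L r G → ZMod 2) (v : BVert L) :
    parityMap L r G w (Sum.inr v) =
      (∑ j : Fin r, w (Sum.inr (Sum.inl (j, v)))) + w (Sum.inr (Sum.inr v)) := by
  rw [parityMap_apply]
  simp [inCheck, Fintype.sum_sum_type, Fintype.sum_prod_type]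

theorem parityMap_surjective : Function.Surjective (parityMap L r G) := by
  intro t
  let w : ConsCoord L r G → ZMod 2 := Sum.elim 0 <| Sum.elim (fun p => t (Sum.inl p))
    fun v => t (Sum.inr v) - ∑ j : Fin r, t (Sum.inl (j, v))
  refine ⟨w, funext ?_⟩
  rintro (⟨i, v⟩ | v)
  · simp [w, parityMap_apply_vertex]
  · simp [w, parityMap_apply_cross]

theorem finrank_ker_parityMap_add_card :
    Module.finrank (ZMod 2) (LinearMap.ker (parityMap L r G)) + Fintype.card (ConsCheck L r) =
      Fintype.card (ConsCoord L r G) := by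
  have h := (parityMap L r G).finrank_range_add_finrank_ker
  rw [LinearMap.range_eq_top.2 (parityMap_surjective G), finrank_top] at h
  simpa only [Module.finrank_fintype_fun_eq_card, add_comm] using h

theorem card_consCoord_of_regular (hreg : G.IsRegularOfDegree r) :
    Fintype.card (ConsCoord L r G) = L * r ^ 2 + 2 * L * r + 2 * L := by
  have hE := hreg.two_mul_card_edgeSet
  simp only [Fintype.card_sum, Fintype.card_prod, Fintype.card_fin] at hE ⊢
  nlinarith

theorem card_consCheck : Fintype.card (ConsCheck L r) = 2 * L * r + 2 * L := by
  simp only [Fintype.card_sum, Fintype.card_prod, Fintype.card_fin]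
  ring

end

theorem construction_one_parameters_general {L r : ℕ} (hL : 1 ≤ L)
    (G : SimpleGraph (BVert L)) [DecidableRel G.Adj]
    (hreg : ∀ v, G.degree v = r) :
    Fintype.card (ConsCoord L r G) = L * r ^ 2 + 2 * L * r + 2 * L ∧
    Module.finrank (ZMod 2) (LinearMap.ker (parityMap L r G)) = L * r ^ 2 ∧
    (Module.finrank (ZMod 2) (LinearMap.ker (parityMap L r G)) : ℚ) /
        (Fintype.card (ConsCoord L r G) : ℚ) =
      (r : ℚ) ^ 2 / ((r : ℚ) ^ 2 + 2 * r + 2) := by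
  have hn := card_consCoord_of_regular G hreg
  have hk : Module.finrank (ZMod 2) (LinearMap.ker (parityMap L r G)) = L * r ^ 2 := by
    have := finrank_ker_parityMap_add_card (r := r) G
    rw [hn, card_consCheck] at this
    omega
  refine ⟨hn, hk, ?_⟩
  rw [hk, hn]
  have hL0 : (L : ℚ) ≠ 0 := Nat.cast_ne_zero.2 (by omega)
  push_cast
  field_simp

/-- Construction 1, applied to an `r`-regular bipartite graph on `2L` vertices with girth
at least `6` (with `r ≥ 2`, `L ≥ 1`), yields a binary code of length `Lr² + 2Lr + 2L` and
dimension `Lr²`, hence of rate `r²/(r² + 2r + 2)`, meeting the rate bound for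
`(n,k,r,4)_seq` codes with equality. -/
theorem construction_one_parameters {L r : ℕ} (hL : 1 ≤ L) (hr : 2 ≤ r)
    (G : SimpleGraph (BVert L)) [DecidableRel G.Adj]
    (hbip : ∀ a b : Fin L, ¬ G.Adj (Sum.inl a) (Sum.inl b) ∧
      ¬ G.Adj (Sum.inr a) (Sum.inr b))
    (hreg : ∀ v, G.degree v = r)
    (hgirth : 6 ≤ G.girth) :
    Fintype.card (ConsCoord L r G) = L * r ^ 2 + 2 * L * r + 2 * L ∧
    Module.finrank (ZMod 2) (LinearMap.ker (parityMap L r G)) = L * r ^ 2 ∧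
    (Module.finrank (ZMod 2) (LinearMap.ker (parityMap L r G)) : ℚ) /
        (Fintype.card (ConsCoord L r G) : ℚ) =
      (r : ℚ) ^ 2 / ((r : ℚ) ^ 2 + 2 * r + 2) :=
  construction_one_parameters_general hL G hreg
end

section
/- Let H be an m×n matrix over F_q whose rows each have weight ≤ r+1. Suppose the weight-1 columns occupy s_1 distinct rows (one nonzero per row, rows 1..s_1 after permutation), and let B be the submatrix formed by rows s_1+1,...,m and the weight-2 columns having exactly one nonzero entry among the first s_1 rows. If the code ker(H°) (for the code whose dual contains the rows of H) permits recovery from all 4-erasure patterns sequentially, then every row of B has at most one nonzero entry. -/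
/-!
If a row `i` outside the weight-one rows met two `B`-columns `j₁, j₂`, each of them could be
cleared outside row `i` by subtracting a multiple of the weight-one column in its other row, and a
combination of the two reduced columns is a nonzero kernel vector `μ` of `H` supported on at most
four coordinates. Every functional used in sequential recovery is a dual codeword of weight
`≤ r + 1`, hence lies in the row space of `H` and is orthogonal to `μ`. Erasing the support of `μ`,
the functional that recovers the first erased coordinate vanishes on all the others, so
orthogonality forces `μ` to vanish at that coordinate: a contradiction.
-/

open Finset

/-- The set of rows containing the nonzero entry of some weight-one column of `H`. -/
def rowsOfWtOneCols {m n : ℕ} {F : Type*} [Field F] [DecidableEq F]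
    (H : Matrix (Fin m) (Fin n) F) : Finset (Fin m) :=
  @Finset.filter _ (fun i => ∃ j, wt (fun i' => H i' j) = 1 ∧ H i j ≠ 0)
    (fun _ => Fintype.decidableExistsFintype) Finset.univ

/-- A column of the block `B`: a column of weight `2` having exactly one nonzero entry in
the rows carrying the weight-one columns. -/
def isBCol {m n : ℕ} {F : Type*} [Field F] [DecidableEq F]
    (H : Matrix (Fin m) (Fin n) F) (j : Fin n) : Prop :=
  wt (fun i => H i j) = 2 ∧
    (Finset.univ.filter (fun i => i ∈ rowsOfWtOneCols H ∧ H i j ≠ 0)).card = 1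

instance {m n : ℕ} {F : Type*} [Field F] [DecidableEq F]
    (H : Matrix (Fin m) (Fin n) F) (j : Fin n) : Decidable (isBCol H j) := by
  unfold isBCol; infer_instance

open Matrix

lemma eq_of_wt_eq_one {ι F : Type*} [Fintype ι] [Field F] [DecidableEq F] {v : ι → F}
    (hv : wt v = 1) {a b : ι} (ha : v a ≠ 0) (hb : v b ≠ 0) : b = a := by
  obtain ⟨x, hx⟩ := Finset.card_eq_one.mp hv
  have hmem : ∀ k, v k ≠ 0 → k = x := fun k hk =>
    Finset.mem_singleton.mp (hx ▸ Finset.mem_filter.mpr ⟨Finset.mem_univ k, hk⟩)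
  rw [hmem b hb, hmem a ha]

lemma eq_or_eq_of_wt_eq_two {ι F : Type*} [Fintype ι] [DecidableEq ι] [Field F] [DecidableEq F]
    {v : ι → F} (hv : wt v = 2) {a b : ι} (hab : a ≠ b) (ha : v a ≠ 0) (hb : v b ≠ 0)
    {c : ι} (hc : v c ≠ 0) : c = a ∨ c = b := by
  have hsub : ({a, b} : Finset ι) ⊆ univ.filter (fun k => v k ≠ 0) := by
    simp [Finset.insert_subset_iff, ha, hb]
  have heq := Finset.eq_of_subset_of_card_le hsub (by rw [Finset.card_pair hab]; exact hv.le)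
  have hcmem : c ∈ univ.filter (fun k => v k ≠ 0) := by simp [hc]
  simpa [← heq] using hcmem

lemma wt_le_card_of_support_subset {ι F : Type*} [Fintype ι] [Field F] [DecidableEq F]
    {v : ι → F} {s : Finset ι} (hv : ∀ k ∉ s, v k = 0) : wt v ≤ s.card :=
  Finset.card_le_card fun k hk => by
    by_contra hks; exact (Finset.mem_filter.mp hk).2 (hv k hks)

lemma mem_rowsOfWtOneCols {m n : ℕ} {F : Type*} [Field F] [DecidableEq F]
    {H : Matrix (Fin m) (Fin n) F} {i : Fin m} :
    i ∈ rowsOfWtOneCols H ↔ ∃ j, wt (fun i' => H i' j) = 1 ∧ H i j ≠ 0 := by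
  unfold rowsOfWtOneCols; simp

lemma dotProduct_eq_zero_of_mem_span_rows {R m n : Type*} [CommSemiring R] [Fintype m]
    [Fintype n] {H : Matrix m n R} {μ : n → R} (hμ : H *ᵥ μ = 0) {h : n → R}
    (hh : h ∈ Submodule.span R (Set.range fun i => H i)) : h ⬝ᵥ μ = 0 := by
  obtain ⟨c, rfl⟩ := (range_vecMulLinear H).ge hh
  rw [Matrix.vecMulLinear_apply, ← dotProduct_mulVec, hμ, dotProduct_zero]

theorem SeqRecov.eq_zero_of_wt_le {n : ℕ} {F : Type*} [Field F] [DecidableEq F]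
    {C : Submodule F (Fin n → F)} {r t : ℕ} (hC : SeqRecov C r t) {μ : Fin n → F}
    (hμ : wt μ ≤ t)
    (horth : ∀ h : Fin n → F, (∀ c ∈ C, ∑ i, h i * c i = 0) → wt h ≤ r + 1 → h ⬝ᵥ μ = 0) :
    μ = 0 := by
  by_contra hne
  obtain ⟨σ, -, hσ, hrec⟩ := hC _ hμ
  have hsupp : ∀ k, μ k ≠ 0 → k ∈ σ := fun k hk => by
    rw [← List.mem_toFinset, hσ]; simpa using hk
  obtain ⟨k, hk⟩ := Function.ne_iff.mp hne
  have hpos : 0 < σ.length := List.length_pos_of_mem (hsupp k hk)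
  set first := σ.get ⟨0, hpos⟩
  obtain ⟨h, hdual, hwt, hfirst, hlater⟩ := hrec ⟨0, hpos⟩
  have hsingle : h ⬝ᵥ μ = h first * μ first := by
    refine Finset.sum_eq_single first (fun k _ hkf => ?_) (by simp)
    by_cases hμk : μ k = 0
    · rw [hμk, mul_zero]
    obtain ⟨j, rfl⟩ := List.mem_iff_get.mp (hsupp k hμk)
    have hj : 0 < (j : ℕ) := Nat.pos_of_ne_zero fun hj0 => hkf (congrArg σ.get (Fin.ext hj0))
    rw [hlater j hj, zero_mul]
  have hfirst_supp : μ first ≠ 0 := by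
    have : first ∈ σ.toFinset := List.mem_toFinset.mpr (List.get_mem _ _)
    simpa [hσ] using this
  exact mul_ne_zero hfirst hfirst_supp (hsingle ▸ horth h hdual hwt)

theorem SeqRecov.eq_zero_of_mulVec_eq_zero {m n : ℕ} {F : Type*} [Field F] [DecidableEq F]
    {C : Submodule F (Fin n → F)} {r t : ℕ} (hC : SeqRecov C r t) {H : Matrix (Fin m) (Fin n) F}
    (hspan : ∀ h : Fin n → F, (∀ c ∈ C, ∑ j, h j * c j = 0) → wt h ≤ r + 1 →
      h ∈ Submodule.span F (Set.range fun i => H i))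
    {μ : Fin n → F} (hμ : wt μ ≤ t) (hHμ : H *ᵥ μ = 0) : μ = 0 :=
  hC.eq_zero_of_wt_le hμ fun h hdual hwt =>
    dotProduct_eq_zero_of_mem_span_rows hHμ (hspan h hdual hwt)

lemma mulVec_single_sub_smul_single_eq_single {m n F : Type*} [Field F] [DecidableEq m]
    [Fintype n] [DecidableEq n] {H : Matrix m n F} {i i' : m} {j c : n} (hii' : i ≠ i')
    (hj : ∀ k, H k j ≠ 0 → k = i ∨ k = i') (hc : ∀ k, H k c ≠ 0 → k = i')
    (hi'c : H i' c ≠ 0) :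
    H *ᵥ (Pi.single j 1 - (H i' j / H i' c) • Pi.single c 1) = Pi.single i (H i j) := by
  ext k
  simp only [mulVec_sub, mulVec_smul, mulVec_single_one, Pi.sub_apply, Pi.smul_apply, col_apply,
    smul_eq_mul, Pi.single_apply]
  by_cases hki : k = i
  · subst hki
    have hkc : H k c = 0 := by_contra fun h => hii' (hc k h)
    simp [hkc]
  by_cases hki' : k = i'
  · subst hki'
    field_simp
    simp [hki]
  have hkj : H k j = 0 := by_contra fun h => (hj k h).elim hki hki'
  have hkc : H k c = 0 := by_contra fun h => hki' (hc k h)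
  simp [hki, hkj, hkc]

lemma exists_mulVec_eq_single_of_isBCol {m n : ℕ} {F : Type*} [Field F] [DecidableEq F]
    {H : Matrix (Fin m) (Fin n) F} {i : Fin m} (hi : i ∉ rowsOfWtOneCols H) {j : Fin n}
    (hj : isBCol H j) (hij : H i j ≠ 0) :
    ∃ (c : Fin n) (t : F), wt (fun k => H k c) = 1 ∧
      H *ᵥ (Pi.single j 1 - t • Pi.single c 1) = Pi.single i (H i j) := by
  obtain ⟨i', hi'⟩ := Finset.card_eq_one.mp hj.2
  have hi'mem : i' ∈ rowsOfWtOneCols H ∧ H i' j ≠ 0 :=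
    (Finset.mem_filter.mp (hi'.ge (Finset.mem_singleton_self i'))).2
  obtain ⟨c, hc, hi'c⟩ := mem_rowsOfWtOneCols.mp hi'mem.1
  have hii' : i ≠ i' := fun h => hi (h ▸ hi'mem.1)
  exact ⟨c, _, hc, mulVec_single_sub_smul_single_eq_single hii'
    (fun k hk => eq_or_eq_of_wt_eq_two hj.1 hii' hij hi'mem.2 hk)
    (fun k hk => eq_of_wt_eq_one hc hi'c hk) hi'c⟩

theorem B_rows_at_most_one_nonzero_general {n m r : ℕ} {F : Type*} [Field F] [DecidableEq F]
    (C : Submodule F (Fin n → F)) (hseq : SeqRecov C r 4)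
    (H : Matrix (Fin m) (Fin n) F)
    (hspan : ∀ h : Fin n → F, (∀ c ∈ C, ∑ j, h j * c j = 0) → wt h ≤ r + 1 →
      h ∈ Submodule.span F (Set.range fun i => H i)) :
    ∀ i : Fin m, i ∉ rowsOfWtOneCols H →
      (Finset.univ.filter (fun j => isBCol H j ∧ H i j ≠ 0)).card ≤ 1 := by
  intro i hi
  by_contra! hcard
  obtain ⟨j₁, hj₁, j₂, hj₂, hj⟩ := Finset.one_lt_card.mp hcard
  simp only [Finset.mem_filter, Finset.mem_univ, true_and] at hj₁ hj₂
  obtain ⟨c₁, t₁, hc₁, hν₁⟩ := exists_mulVec_eq_single_of_isBCol hi hj₁.1 hj₁.2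
  obtain ⟨c₂, t₂, hc₂, hν₂⟩ := exists_mulVec_eq_single_of_isBCol hi hj₂.1 hj₂.2
  have hc₁j₁ : c₁ ≠ j₁ := by rintro rfl; exact absurd (hc₁.symm.trans hj₁.1.1) (by decide)
  have hc₂j₁ : c₂ ≠ j₁ := by rintro rfl; exact absurd (hc₂.symm.trans hj₁.1.1) (by decide)
  set μ : Fin n → F := H i j₂ • (Pi.single j₁ 1 - t₁ • Pi.single c₁ 1) -
    H i j₁ • (Pi.single j₂ 1 - t₂ • Pi.single c₂ 1)
  have hHμ : H *ᵥ μ = 0 := by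
    ext k
    simp only [μ, mulVec_sub, mulVec_smul, hν₁, hν₂, Pi.sub_apply, Pi.smul_apply, Pi.single_apply]
    split_ifs <;> simp [mul_comm]
  have hwt : wt μ ≤ 4 := by
    refine (wt_le_card_of_support_subset (s := {j₁, c₁, j₂, c₂}) fun k hk => ?_).trans
      Finset.card_le_four
    simp only [Finset.mem_insert, Finset.mem_singleton, not_or] at hk
    simp [μ, hk]
  have hμj₁ : μ j₁ ≠ 0 := by simp [μ, hj, hc₁j₁.symm, hc₂j₁.symm, hj₂.2]
  exact hμj₁ (congrFun (hseq.eq_zero_of_mulVec_eq_zero hspan hwt hHμ) j₁)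

/-- In the setting of the rate-bound proof for `(n,k,r,4)_seq` codes, each row of the
block `B` (rows outside those carrying the weight-one columns, columns of weight `2` with
exactly one nonzero entry in the weight-one rows) has at most one nonzero entry. -/
theorem B_rows_at_most_one_nonzero {n m r : ℕ} {F : Type*} [Field F] [DecidableEq F]
    (hr : 1 ≤ r) (C : Submodule F (Fin n → F)) (hseq : SeqRecov C r 4)
    (H : Matrix (Fin m) (Fin n) F)
    (hind : LinearIndependent F (fun i => H i))
    (hdual : ∀ i, (∀ c ∈ C, ∑ j, H i j * c j = 0) ∧ wt (H i) ≤ r + 1)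
    (hspan : ∀ h : Fin n → F, (∀ c ∈ C, ∑ j, h j * c j = 0) → wt h ≤ r + 1 →
      h ∈ Submodule.span F (Set.range fun i => H i)) :
    ∀ i : Fin m, i ∉ rowsOfWtOneCols H →
      (Finset.univ.filter (fun j => isBCol H j ∧ H i j ≠ 0)).card ≤ 1 :=
  B_rows_at_most_one_nonzero_general C hseq H hspan
end
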